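/- Let k ∈ ℝ, let K ⊆ ℝ³ be a compact set with μH²(K) < ∞, and let φ : ℝ³ → ℂ be a bounded measurable function. Then the single-layer potential u(x) = ∫_{y ∈ K} Φ_k(x,y) · φ(y) dμH²(y) satisfies: (a) there exist constants C > 0 and R > 0 such that |u(x)| ≤ C/‖x‖ for all ‖x‖ ≥ R, and (b) ‖x‖ · ((fderiv u x)(‖x‖⁻¹ • x) − i·k·u(x)) tends to 0 as ‖x‖ → ∞, i.e. u satisfies the Sommerfeld radiation condition with wave number k. -/

import Mathlib

/-!
If the density lives in the ball of radius `R` and `‖x‖ ≥ 2R`, then `‖x - y‖ ≥ ‖x‖ / 2` on the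
support, so `Φ_k(x, y) = O(1/‖x‖)` uniformly in `y`, which gives the decay. The kernel has
gradient `∇ₓΦ_k = Φ_k (ik - 1/r) (x - y)/r` with `r = ‖x - y‖`, bounded away from the support,
so the potential may be differentiated under the integral sign. Since
`⟪x - y, x/‖x‖⟫ = r + O(‖y‖)`, the radial derivative of `Φ_k` minus `ik Φ_k` is `O(1/‖x‖²)`
uniformly in `y`, and the radiation condition follows after multiplying by `‖x‖`.
-/

open Complex MeasureTheory Filter Bornology
open scoped ENNReal

/-- The fundamental solution of the Helmholtz equation with wave number `k`. -/
noncomputable def Phi (k : ℝ) (x y : EuclideanSpace ℝ (Fin 3)) : ℂ :=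
  Complex.exp (Complex.I * k * ‖x - y‖) / (4 * Real.pi * ‖x - y‖)

open Real RealInnerProductSpace

local notation "ℝ³" => EuclideanSpace ℝ (Fin 3)

theorem norm_inv_norm_smul_le_one {E : Type*} [SeminormedAddCommGroup E] [NormedSpace ℝ E]
    (x : E) : ‖‖x‖⁻¹ • x‖ ≤ 1 := by
  rw [norm_smul, norm_inv, norm_norm]
  exact inv_mul_le_one_of_le₀ le_rfl (norm_nonneg _)

section InnerProductSpace

variable {E : Type*} [NormedAddCommGroup E] [InnerProductSpace ℝ E]

theorem hasFDerivAt_norm {x : E} (hx : x ≠ 0) :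
    HasFDerivAt (‖·‖) (‖x‖⁻¹ • innerSL ℝ x) x := by
  have hx' : ‖x‖ ≠ 0 := norm_ne_zero_iff.2 hx
  have h := (hasStrictFDerivAt_norm_sq x).hasFDerivAt.sqrt (pow_ne_zero 2 hx')
  simp only [Real.sqrt_sq (norm_nonneg _)] at h
  refine h.congr_fderiv ?_
  ext v
  simp only [smul_apply, innerSL_apply_apply, smul_eq_mul, nsmul_eq_mul]
  field_simp
  ring

theorem abs_inner_sub_norm_sub_le (x y : E) :
    |⟪x - y, ‖x‖⁻¹ • x⟫ - ‖x - y‖| ≤ 2 * ‖y‖ := by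
  have hunit := norm_inv_norm_smul_le_one x
  have hx : ⟪x, ‖x‖⁻¹ • x⟫ = ‖x‖ := by
    rcases eq_or_ne x 0 with rfl | hx
    · simp
    rw [real_inner_smul_right, real_inner_self_eq_norm_sq]
    field_simp
  have hy : |⟪y, ‖x‖⁻¹ • x⟫| ≤ ‖y‖ :=
    (abs_real_inner_le_norm _ _).trans (mul_le_of_le_one_right (norm_nonneg _) hunit)
  have hxy : |‖x‖ - ‖x - y‖| ≤ ‖y‖ := by
    simpa using abs_norm_sub_norm_le x (x - y)
  rw [inner_sub_left, hx]
  calc |‖x‖ - ⟪y, ‖x‖⁻¹ • x⟫ - ‖x - y‖| = |(‖x‖ - ‖x - y‖) - ⟪y, ‖x‖⁻¹ • x⟫| := by ring_nf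
    _ ≤ |‖x‖ - ‖x - y‖| + |⟪y, ‖x‖⁻¹ • x⟫| := abs_sub _ _
    _ ≤ 2 * ‖y‖ := by linarith

end InnerProductSpace

theorem half_norm_le_norm_sub {E : Type*} [SeminormedAddCommGroup E] {x y : E}
    (h : 2 * ‖y‖ ≤ ‖x‖) : ‖x‖ / 2 ≤ ‖x - y‖ := by
  linarith [norm_sub_norm_le x y]

theorem norm_integral_mul_le_of_norm_le {α : Type*} [MeasurableSpace α] {μ : Measure α}
    {f φ : α → ℂ} {C : ℝ} (hφ : Integrable φ μ) (hf : ∀ᵐ y ∂μ, ‖f y‖ ≤ C) :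
    ‖∫ y, f y * φ y ∂μ‖ ≤ C * ∫ y, ‖φ y‖ ∂μ := by
  rw [← integral_const_mul]
  refine norm_integral_le_of_norm_le (hφ.norm.const_mul C) (hf.mono fun y hy => ?_)
  rw [norm_mul]
  exact mul_le_mul_of_nonneg_right hy (norm_nonneg _)

noncomputable def helmholtzProfile (k r : ℝ) : ℂ :=
  cexp (I * k * r) / (4 * π * r)

theorem hasDerivAt_helmholtzProfile (k : ℝ) {r : ℝ} (hr : r ≠ 0) :
    HasDerivAt (helmholtzProfile k) (helmholtzProfile k r * (I * k - (r : ℂ)⁻¹)) r := by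
  have hid : HasDerivAt (fun r : ℝ => (r : ℂ)) 1 r := (hasDerivAt_id r).ofReal_comp
  have hexp := (hid.const_mul (I * k)).cexp
  have hden := hid.const_mul (4 * π : ℂ)
  have hrC : (r : ℂ) ≠ 0 := ofReal_ne_zero.2 hr
  refine (hexp.div hden (by simp [hrC, Real.pi_ne_zero])).congr_deriv ?_
  simp only [helmholtzProfile]
  field_simp

noncomputable def PhiFDeriv (k : ℝ) (x y : ℝ³) : ℝ³ →L[ℝ] ℂ :=
  (Phi k x y * (I * k - (‖x - y‖ : ℂ)⁻¹) * (‖x - y‖ : ℂ)⁻¹) • (ofRealCLM ∘L innerSL ℝ (x - y))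

theorem PhiFDeriv_apply (k : ℝ) (x y v : ℝ³) :
    PhiFDeriv k x y v =
      Phi k x y * (I * k - (‖x - y‖ : ℂ)⁻¹) * (‖x - y‖ : ℂ)⁻¹ * (⟪x - y, v⟫ : ℝ) :=
  rfl

theorem hasFDerivAt_Phi (k : ℝ) {x : ℝ³} (y : ℝ³) (hxy : x ≠ y) :
    HasFDerivAt (Phi k · y) (PhiFDeriv k x y) x := by
  have hr : ‖x - y‖ ≠ 0 := norm_ne_zero_iff.2 (sub_ne_zero.2 hxy)
  have h := (hasDerivAt_helmholtzProfile k hr).hasFDerivAt.comp x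
    ((hasFDerivAt_norm (sub_ne_zero.2 hxy)).comp x ((hasFDerivAt_id x).sub_const y))
  refine h.congr_fderiv ?_
  ext v
  simp only [helmholtzProfile, map_sub, ContinuousLinearMap.comp_id,
    ContinuousLinearMap.comp_smulₛₗ, map_inv₀, ringHom_apply, ContinuousLinearMap.comp_sub,
    smul_apply, sub_apply, ContinuousLinearMap.comp_apply, coe_innerSL_apply,
    ContinuousLinearMap.toSpanSingleton_apply, real_smul, ofReal_inv, PhiFDeriv_apply, Phi,
    inner_sub_left, ofReal_sub]
  ring

theorem norm_Phi (k : ℝ) (x y : ℝ³) : ‖Phi k x y‖ = (4 * π * ‖x - y‖)⁻¹ := by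
  have hexp : I * k * ‖x - y‖ = I * ((k * ‖x - y‖ : ℝ) : ℂ) := by push_cast; ring
  have hden : (4 * π * ‖x - y‖ : ℂ) = ((4 * π * ‖x - y‖ : ℝ) : ℂ) := by push_cast; ring
  rw [Phi, norm_div, hexp, norm_exp_I_mul_ofReal, hden, norm_real,
    Real.norm_of_nonneg (by positivity), one_div]

theorem norm_Phi_le (k : ℝ) {x y : ℝ³} {ρ : ℝ} (hρ : 0 < ρ) (h : ρ ≤ ‖x - y‖) :
    ‖Phi k x y‖ ≤ (4 * π * ρ)⁻¹ := by
  rw [norm_Phi]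
  gcongr

theorem norm_PhiFDeriv_le (k : ℝ) {x y : ℝ³} {ρ : ℝ} (hρ : 0 < ρ) (h : ρ ≤ ‖x - y‖) :
    ‖PhiFDeriv k x y‖ ≤ (|k| + ρ⁻¹) * (4 * π * ρ)⁻¹ := by
  have hr : 0 < ‖x - y‖ := hρ.trans_le h
  refine ContinuousLinearMap.opNorm_le_bound _ (by positivity) fun v => ?_
  have hfactor : ‖I * k - (‖x - y‖ : ℂ)⁻¹‖ ≤ |k| + ρ⁻¹ := by
    refine (norm_sub_le _ _).trans ?_
    rw [norm_inv, norm_real, Real.norm_of_nonneg hr.le]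
    simp only [norm_mul, norm_I, norm_real, Real.norm_eq_abs, one_mul]
    gcongr
  have hinner : ‖((⟪x - y, v⟫ : ℝ) : ℂ)‖ ≤ ‖x - y‖ * ‖v‖ := by
    rw [norm_real, Real.norm_eq_abs]
    exact abs_real_inner_le_norm _ _
  calc ‖PhiFDeriv k x y v‖
      = ‖Phi k x y‖ * ‖I * k - (‖x - y‖ : ℂ)⁻¹‖ * ‖x - y‖⁻¹ * ‖((⟪x - y, v⟫ : ℝ) : ℂ)‖ := by
        simp [PhiFDeriv_apply]
    _ ≤ (4 * π * ρ)⁻¹ * (|k| + ρ⁻¹) * ‖x - y‖⁻¹ * (‖x - y‖ * ‖v‖) := by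
        gcongr
        exact norm_Phi_le k hρ h
    _ = (|k| + ρ⁻¹) * (4 * π * ρ)⁻¹ * ‖v‖ := by
        field_simp

theorem norm_PhiFDeriv_radial_sub_le (k : ℝ) {x y : ℝ³} (hxy : x ≠ y) :
    ‖PhiFDeriv k x y (‖x‖⁻¹ • x) - I * k * Phi k x y‖ ≤
      (2 * |k| * ‖y‖ + 1) / (4 * π * ‖x - y‖ ^ 2) := by
  set r := ‖x - y‖ with hr_def
  set a := ⟪x - y, ‖x‖⁻¹ • x⟫ with ha_def
  have hr : 0 < r := norm_pos_iff.2 (sub_ne_zero.2 hxy)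
  have har : |a - r| ≤ 2 * ‖y‖ := abs_inner_sub_norm_sub_le x y
  have ha : |a| ≤ r :=
    (abs_real_inner_le_norm _ _).trans
      (mul_le_of_le_one_right (norm_nonneg _) (norm_inv_norm_smul_le_one x))
  have hsplit : PhiFDeriv k x y (‖x‖⁻¹ • x) - I * k * Phi k x y =
      Phi k x y * ((I * k * (a - r) - a / r) / r) := by
    rw [PhiFDeriv_apply, ← ha_def, ← hr_def]
    have : (r : ℂ) ≠ 0 := ofReal_ne_zero.2 hr.ne'
    field_simp
    ring
  have hbracket : ‖I * k * (a - r) - a / r‖ ≤ 2 * |k| * ‖y‖ + 1 := by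
    refine (norm_sub_le _ _).trans ?_
    have hquot : |a| / r ≤ 1 := (div_le_one hr).2 ha
    simp only [← ofReal_sub, ← ofReal_div, norm_mul, norm_I, norm_real, Real.norm_eq_abs,
      one_mul, abs_div, abs_of_pos hr]
    nlinarith [abs_nonneg k]
  rw [hsplit, norm_mul, norm_Phi, norm_div, norm_real, Real.norm_of_nonneg hr.le]
  calc (4 * π * r)⁻¹ * (‖I * k * (a - r) - a / r‖ / r)
      ≤ (4 * π * r)⁻¹ * ((2 * |k| * ‖y‖ + 1) / r) := by gcongr
    _ = (2 * |k| * ‖y‖ + 1) / (4 * π * r ^ 2) := by field_simp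

@[fun_prop]
theorem measurable_Phi (k : ℝ) (x : ℝ³) : Measurable (Phi k x) := by
  unfold Phi
  fun_prop

theorem aestronglyMeasurable_PhiFDeriv (k : ℝ) (x : ℝ³) (μ : Measure ℝ³) :
    AEStronglyMeasurable (PhiFDeriv k x) μ := by
  unfold PhiFDeriv
  fun_prop

noncomputable def singleLayerPotential (k : ℝ) (μ : Measure ℝ³) (φ : ℝ³ → ℂ) (x : ℝ³) : ℂ :=
  ∫ y, Phi k x y * φ y ∂μ

section SingleLayerPotential

variable {k : ℝ} {μ : Measure ℝ³} {φ : ℝ³ → ℂ}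

theorem integrable_Phi_mul (hφ : Integrable φ μ) {x : ℝ³} {ρ : ℝ} (hρ : 0 < ρ)
    (hsep : ∀ᵐ y ∂μ, ρ ≤ ‖x - y‖) : Integrable (fun y => Phi k x y * φ y) μ :=
  hφ.bdd_mul (measurable_Phi k x).aestronglyMeasurable (hsep.mono fun _ hy => norm_Phi_le k hρ hy)

theorem integrable_smul_PhiFDeriv (hφ : Integrable φ μ) {x : ℝ³} {ρ : ℝ} (hρ : 0 < ρ)
    (hsep : ∀ᵐ y ∂μ, ρ ≤ ‖x - y‖) : Integrable (fun y => φ y • PhiFDeriv k x y) μ :=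
  hφ.smul_bdd _ (aestronglyMeasurable_PhiFDeriv k x μ)
    (hsep.mono fun _ hy => norm_PhiFDeriv_le k hρ hy)

theorem hasFDerivAt_singleLayerPotential (hφ : Integrable φ μ) {x₀ : ℝ³} {ρ : ℝ} (hρ : 0 < ρ)
    (hsep : ∀ᵐ y ∂μ, 2 * ρ ≤ ‖x₀ - y‖) :
    HasFDerivAt (singleLayerPotential k μ φ) (∫ y, φ y • PhiFDeriv k x₀ y ∂μ) x₀ := by
  have hball : ∀ᵐ y ∂μ, ∀ x ∈ Metric.ball x₀ ρ, ρ ≤ ‖x - y‖ := hsep.mono fun y hy x hx => by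
    rw [Metric.mem_ball, dist_eq_norm] at hx
    linarith [norm_sub_le_norm_sub_add_norm_sub x₀ x y, norm_sub_rev x x₀]
  have hsep₀ : ∀ᵐ y ∂μ, ρ ≤ ‖x₀ - y‖ := hball.mono fun y hy => hy x₀ (Metric.mem_ball_self hρ)
  refine hasFDerivAt_integral_of_dominated_of_fderiv_le (Metric.ball_mem_nhds x₀ hρ)
    (F' := fun x y => φ y • PhiFDeriv k x y)
    (bound := fun y => ‖φ y‖ * ((|k| + ρ⁻¹) * (4 * π * ρ)⁻¹))
    (Eventually.of_forall fun x => (measurable_Phi k x).aestronglyMeasurable.mul hφ.1)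
    (integrable_Phi_mul hφ hρ hsep₀) (integrable_smul_PhiFDeriv hφ hρ hsep₀).1 ?_
    (hφ.norm.mul_const _) ?_
  · filter_upwards [hball] with y hy x hx
    rw [norm_smul]
    gcongr
    exact norm_PhiFDeriv_le k hρ (hy x hx)
  · filter_upwards [hball] with y hy x hx
    have hxy : x ≠ y := sub_ne_zero.1 (norm_pos_iff.1 (hρ.trans_le (hy x hx)))
    exact (hasFDerivAt_Phi k y hxy).mul_const (φ y)

theorem norm_singleLayerPotential_le (hφ : Integrable φ μ) {R : ℝ} (hsupp : ∀ᵐ y ∂μ, ‖y‖ ≤ R)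
    {x : ℝ³} (hx : x ≠ 0) (hxR : 2 * R ≤ ‖x‖) :
    ‖singleLayerPotential k μ φ x‖ ≤ (∫ y, ‖φ y‖ ∂μ) / (2 * π * ‖x‖) := by
  have hx' : 0 < ‖x‖ := norm_pos_iff.2 hx
  have hbound : ∀ᵐ y ∂μ, ‖Phi k x y‖ ≤ (4 * π * (‖x‖ / 2))⁻¹ := hsupp.mono fun y hy =>
    norm_Phi_le k (by positivity) (half_norm_le_norm_sub (by linarith))
  calc ‖singleLayerPotential k μ φ x‖ ≤ (4 * π * (‖x‖ / 2))⁻¹ * ∫ y, ‖φ y‖ ∂μ :=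
        norm_integral_mul_le_of_norm_le hφ hbound
    _ = (∫ y, ‖φ y‖ ∂μ) / (2 * π * ‖x‖) := by field_simp; ring

theorem norm_fderiv_radial_sub_singleLayerPotential_le (hφ : Integrable φ μ) {R : ℝ}
    (hsupp : ∀ᵐ y ∂μ, ‖y‖ ≤ R) {x : ℝ³} (hx : x ≠ 0) (hxR : 2 * R ≤ ‖x‖) :
    ‖fderiv ℝ (singleLayerPotential k μ φ) x (‖x‖⁻¹ • x) - I * k * singleLayerPotential k μ φ x‖
      ≤ (2 * |k| * R + 1) * (∫ y, ‖φ y‖ ∂μ) / (π * ‖x‖ ^ 2) := by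
  have hx' : 0 < ‖x‖ := norm_pos_iff.2 hx
  have hsep : ∀ᵐ y ∂μ, ‖x‖ / 2 ≤ ‖x - y‖ :=
    hsupp.mono fun y hy => half_norm_le_norm_sub (by linarith)
  have hsep' : ∀ᵐ y ∂μ, 2 * (‖x‖ / 4) ≤ ‖x - y‖ := hsep.mono fun y hy => by linarith
  have hderiv := hasFDerivAt_singleLayerPotential (k := k) hφ (by positivity) hsep'
  have hbound : ∀ᵐ y ∂μ, ‖PhiFDeriv k x y (‖x‖⁻¹ • x) - I * k * Phi k x y‖ ≤
      (2 * |k| * R + 1) / (π * ‖x‖ ^ 2) := by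
    filter_upwards [hsupp, hsep] with y hy hxy
    have hne : x ≠ y := sub_ne_zero.1 (norm_pos_iff.1 (by linarith))
    calc _ ≤ (2 * |k| * ‖y‖ + 1) / (4 * π * ‖x - y‖ ^ 2) := norm_PhiFDeriv_radial_sub_le k hne
      _ ≤ (2 * |k| * ‖y‖ + 1) / (4 * π * (‖x‖ / 2) ^ 2) := by gcongr
      _ ≤ (2 * |k| * R + 1) / (4 * π * (‖x‖ / 2) ^ 2) := by gcongr
      _ = (2 * |k| * R + 1) / (π * ‖x‖ ^ 2) := by ring
  have hsplit : fderiv ℝ (singleLayerPotential k μ φ) x (‖x‖⁻¹ • x) -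
      I * k * singleLayerPotential k μ φ x =
      ∫ y, (PhiFDeriv k x y (‖x‖⁻¹ • x) - I * k * Phi k x y) * φ y ∂μ := by
    rw [hderiv.fderiv, ContinuousLinearMap.integral_apply
      (integrable_smul_PhiFDeriv hφ (by positivity) hsep), singleLayerPotential,
      ← integral_const_mul, ← integral_sub]
    · congr 1 with y
      simp only [smul_apply, smul_eq_mul]
      ring
    · exact (integrable_smul_PhiFDeriv hφ (by positivity) hsep).apply_continuousLinearMap _
    · exact (integrable_Phi_mul hφ (by positivity) hsep).const_mul _
  rw [hsplit, mul_div_right_comm]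
  exact norm_integral_mul_le_of_norm_le hφ hbound

theorem exists_norm_singleLayerPotential_le_div (hφ : Integrable φ μ) {R : ℝ}
    (hsupp : ∀ᵐ y ∂μ, ‖y‖ ≤ R) :
    ∃ C : ℝ, 0 < C ∧ ∃ R' : ℝ, 0 < R' ∧ ∀ x : ℝ³, R' ≤ ‖x‖ →
      ‖singleLayerPotential k μ φ x‖ ≤ C / ‖x‖ := by
  refine ⟨(∫ y, ‖φ y‖ ∂μ) / (2 * π) + 1, by positivity, 2 * |R| + 1, by positivity,
    fun x hx => ?_⟩
  have hx' : 0 < ‖x‖ := by linarith [abs_nonneg R]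
  calc ‖singleLayerPotential k μ φ x‖ ≤ (∫ y, ‖φ y‖ ∂μ) / (2 * π * ‖x‖) :=
        norm_singleLayerPotential_le hφ hsupp (norm_pos_iff.1 hx') (by linarith [le_abs_self R])
    _ = (∫ y, ‖φ y‖ ∂μ) / (2 * π) / ‖x‖ := by rw [div_div]
    _ ≤ ((∫ y, ‖φ y‖ ∂μ) / (2 * π) + 1) / ‖x‖ := by gcongr; linarith

theorem tendsto_radiation_singleLayerPotential (hφ : Integrable φ μ) {R : ℝ}
    (hsupp : ∀ᵐ y ∂μ, ‖y‖ ≤ R) :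
    Tendsto (fun x : ℝ³ => (‖x‖ : ℂ) * (fderiv ℝ (singleLayerPotential k μ φ) x (‖x‖⁻¹ • x) -
      I * k * singleLayerPotential k μ φ x)) (cobounded ℝ³) (nhds 0) := by
  set C := (2 * |k| * R + 1) * (∫ y, ‖φ y‖ ∂μ) / π
  have hlarge : ∀ᶠ x : ℝ³ in cobounded ℝ³, max (2 * R) 1 ≤ ‖x‖ :=
    tendsto_norm_cobounded_atTop.eventually_ge_atTop _
  refine squeeze_zero_norm' (hlarge.mono fun x hx => ?_)
    ((tendsto_const_nhds (x := C)).div_atTop tendsto_norm_cobounded_atTop)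
  have hx' : 0 < ‖x‖ := by linarith [le_max_right (2 * R) 1]
  rw [norm_mul, norm_real, norm_norm]
  calc ‖x‖ * ‖fderiv ℝ (singleLayerPotential k μ φ) x (‖x‖⁻¹ • x) -
        I * k * singleLayerPotential k μ φ x‖
      ≤ ‖x‖ * ((2 * |k| * R + 1) * (∫ y, ‖φ y‖ ∂μ) / (π * ‖x‖ ^ 2)) := by
        gcongr
        exact norm_fderiv_radial_sub_singleLayerPotential_le hφ hsupp (norm_pos_iff.1 hx')
          ((le_max_left _ _).trans hx)
    _ = C / ‖x‖ := by simp only [C]; field_simp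

end SingleLayerPotential

/-- A single-layer potential with bounded measurable density on a compact set `K` of finite
two-dimensional Hausdorff measure decays like `1/‖x‖` at infinity and satisfies the
Sommerfeld radiation condition with wave number `k`. -/
theorem single_layer_potential_decay_and_radiation (k : ℝ)
    (K : Set (EuclideanSpace ℝ (Fin 3))) (hK : IsCompact K)
    (hKfin : μH[2] K < ⊤)
    (φ : EuclideanSpace ℝ (Fin 3) → ℂ) (hφm : Measurable φ)
    (hφb : ∃ M : ℝ, ∀ y, ‖φ y‖ ≤ M)
    (u : EuclideanSpace ℝ (Fin 3) → ℂ)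
    (hu : ∀ x, u x = ∫ y in K, Phi k x y * φ y ∂(μH[2])) :
    (∃ C : ℝ, 0 < C ∧ ∃ R : ℝ, 0 < R ∧ ∀ x : EuclideanSpace ℝ (Fin 3), R ≤ ‖x‖ →
        ‖u x‖ ≤ C / ‖x‖) ∧
      Tendsto
        (fun x : EuclideanSpace ℝ (Fin 3) =>
          (‖x‖ : ℂ) * (fderiv ℝ u x ((‖x‖)⁻¹ • x) - Complex.I * k * u x))
        (cobounded (EuclideanSpace ℝ (Fin 3))) (nhds 0) := by
  obtain ⟨M, hM⟩ := hφb
  obtain ⟨R, hKR⟩ := hK.isBounded.subset_closedBall 0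
  have : IsFiniteMeasure (μH[2].restrict K) := isFiniteMeasure_restrict.2 hKfin.ne
  have hφ : Integrable φ (μH[2].restrict K) :=
    .of_bound hφm.aestronglyMeasurable M (.of_forall hM)
  have hsupp : ∀ᵐ y ∂(μH[2].restrict K), ‖y‖ ≤ R :=
    ae_restrict_of_forall_mem hK.measurableSet fun y hy => by simpa using hKR hy
  obtain rfl : u = singleLayerPotential k (μH[2].restrict K) φ := funext hu
  exact ⟨exists_norm_singleLayerPotential_le_div hφ hsupp,
    tendsto_radiation_singleLayerPotential hφ hsupp⟩
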